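/- arXiv:2108.01179 — 5 statements merged into one kernel-verified Lean document; each statement's English description precedes it below -/
import Mathlib

section
/- Let X ⊆ ℂⁿ be a closed subset, let x₀ ∈ X, and let π : ℂⁿ → ℂˡ be a surjective ℂ-linear map (the affine-chart form of a linear projection of projective space whose center lies in the hyperplane at infinity). Let Σ₀ denote the closure, in the unit sphere of ℂⁿ, of the set of secant directions {(x − x₀)/‖x − x₀‖ : x ∈ X, x ≠ x₀}. Then the following are equivalent: (i) there exists c > 0 such that c·‖x − x₀‖ ≤ ‖π(x) − π(x₀)‖ for all x ∈ X (equivalently, π restricted to X satisfies the two-sided semi-bi-Lipschitz estimate at x₀, the upper bound ‖π(x) − π(x₀)‖ ≤ ‖π‖·‖x − x₀‖ being automatic); (ii) Σ₀ ∩ ker π = ∅. -/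
/-!
Dividing by `‖x - x₀‖`, a lower bound `c * ‖x - x₀‖ ≤ ‖π x - π x₀‖` on `X` is the same as the
lower bound `c ≤ ‖π v‖` on the unit secant directions `v`. These lie on the unit sphere, which is
compact, so the continuous function `‖π ·‖` is bounded below by a positive constant on them
exactly when it has no zero on their closure `Σ₀`.
-/

open Metric

theorem exists_pos_forall_le_iff_of_isCompact_closure {α : Type*} [TopologicalSpace α]
    {f : α → ℝ} (hf : Continuous f) {S : Set α} (hS : IsCompact (closure S)) :
    (∃ c, 0 < c ∧ ∀ v ∈ S, c ≤ f v) ↔ ∀ v ∈ closure S, 0 < f v := by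
  constructor
  · rintro ⟨c, hc, h⟩ v hv
    exact hc.trans_le (closure_minimal h (isClosed_le continuous_const hf) hv)
  · intro hpos
    rcases (closure S).eq_empty_or_nonempty with hempty | hne
    · exact ⟨1, one_pos, fun v hv => absurd (subset_closure hv) (by simp [hempty])⟩
    · obtain ⟨v₀, hv₀, hmin⟩ := hS.exists_isMinOn hne hf.continuousOn
      exact ⟨f v₀, hpos v₀ hv₀, fun v hv => hmin (subset_closure hv)⟩

section SecantDirections

variable {E F : Type*} [NormedAddCommGroup E] [NormedSpace ℝ E]
  [NormedAddCommGroup F] [NormedSpace ℝ F]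

def secantDirections (X : Set E) (x₀ : E) : Set E :=
  {v | ∃ x ∈ X, x ≠ x₀ ∧ v = ‖x - x₀‖⁻¹ • (x - x₀)}

theorem secantDirections_subset_sphere (X : Set E) (x₀ : E) :
    secantDirections X x₀ ⊆ sphere 0 1 := by
  rintro _ ⟨x, -, hne, rfl⟩
  rw [mem_sphere_zero_iff_norm, norm_smul, norm_inv, norm_norm,
    inv_mul_cancel₀ (norm_ne_zero_iff.2 (sub_ne_zero.2 hne))]

theorem isCompact_closure_secantDirections [ProperSpace E] (X : Set E) (x₀ : E) :
    IsCompact (closure (secantDirections X x₀)) :=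
  (isCompact_sphere 0 1).of_isClosed_subset isClosed_closure
    (closure_minimal (secantDirections_subset_sphere X x₀) isClosed_sphere)

theorem norm_map_smul_inv_norm_sub (π : E →L[ℝ] F) (x x₀ : E) :
    ‖π (‖x - x₀‖⁻¹ • (x - x₀))‖ = ‖x - x₀‖⁻¹ * ‖π x - π x₀‖ := by
  rw [map_smul, norm_smul, norm_inv, norm_norm, map_sub]

theorem forall_mul_norm_sub_le_iff_forall_secantDirections (π : E →L[ℝ] F) (X : Set E)
    (x₀ : E) (c : ℝ) :
    (∀ x ∈ X, c * ‖x - x₀‖ ≤ ‖π x - π x₀‖) ↔ ∀ v ∈ secantDirections X x₀, c ≤ ‖π v‖ := by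
  constructor
  · rintro h _ ⟨x, hx, hne, rfl⟩
    rw [norm_map_smul_inv_norm_sub, le_inv_mul_iff₀' (norm_pos_iff.2 (sub_ne_zero.2 hne))]
    exact h x hx
  · intro h x hx
    rcases eq_or_ne x x₀ with rfl | hne
    · simp
    · have hv := h _ ⟨x, hx, hne, rfl⟩
      rwa [norm_map_smul_inv_norm_sub,
        le_inv_mul_iff₀' (norm_pos_iff.2 (sub_ne_zero.2 hne))] at hv

theorem exists_pos_mul_norm_sub_le_iff [ProperSpace E] (π : E →L[ℝ] F) (X : Set E) (x₀ : E) :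
    (∃ c, 0 < c ∧ ∀ x ∈ X, c * ‖x - x₀‖ ≤ ‖π x - π x₀‖) ↔
      ∀ v ∈ closure (secantDirections X x₀), π v ≠ 0 := by
  simp_rw [forall_mul_norm_sub_le_iff_forall_secantDirections,
    exists_pos_forall_le_iff_of_isCompact_closure (f := fun v => ‖π v‖) (by fun_prop)
      (isCompact_closure_secantDirections X x₀), norm_pos_iff]

end SecantDirections

theorem stmt_1_general (n l : ℕ) (X : Set (EuclideanSpace ℂ (Fin n)))
    (x₀ : EuclideanSpace ℂ (Fin n))
    (π : EuclideanSpace ℂ (Fin n) →L[ℂ] EuclideanSpace ℂ (Fin l)) :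
    (∃ c : ℝ, 0 < c ∧ ∀ x ∈ X, c * ‖x - x₀‖ ≤ ‖π x - π x₀‖) ↔
      closure {v : EuclideanSpace ℂ (Fin n) |
          ∃ x ∈ X, x ≠ x₀ ∧ v = ‖x - x₀‖⁻¹ • (x - x₀)} ∩
        {v : EuclideanSpace ℂ (Fin n) | π v = 0} = ∅ := by
  rw [Set.eq_empty_iff_forall_notMem]
  simpa [secantDirections] using exists_pos_mul_norm_sub_le_iff (π.restrictScalars ℝ) X x₀

/-- For a closed `X ⊆ ℂⁿ`, `x₀ ∈ X`, and a surjective `ℂ`-linear projection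
`π : ℂⁿ → ℂˡ`, the restriction `π|_X` is semi-bi-Lipschitz at `x₀` (i.e. admits a lower bound
`c·‖x - x₀‖ ≤ ‖π x - π x₀‖` on `X`, the upper bound being automatic) if and only if the closure
`Σ₀` of the set of secant directions of `X` through `x₀` is disjoint from `ker π`. -/
theorem stmt_1 (n l : ℕ) (X : Set (EuclideanSpace ℂ (Fin n))) (hXcl : IsClosed X)
    (x₀ : EuclideanSpace ℂ (Fin n)) (hx₀ : x₀ ∈ X)
    (π : EuclideanSpace ℂ (Fin n) →L[ℂ] EuclideanSpace ℂ (Fin l))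
    (hsurj : Function.Surjective π) :
    (∃ c : ℝ, 0 < c ∧ ∀ x ∈ X, c * ‖x - x₀‖ ≤ ‖π x - π x₀‖) ↔
      closure {v : EuclideanSpace ℂ (Fin n) |
          ∃ x ∈ X, x ≠ x₀ ∧ v = ‖x - x₀‖⁻¹ • (x - x₀)} ∩
        {v : EuclideanSpace ℂ (Fin n) | π v = 0} = ∅ :=
  stmt_1_general n l X x₀ π
end

section
/- Let X ⊆ ℝⁿ be a subset, let x₀ ∈ X, and let π : ℝⁿ → ℝˡ be an ℝ-linear map for which there exists c > 0 with c·‖x − x₀‖ ≤ ‖π(x) − π(x₀)‖ for all x ∈ X. Then the kernel of π meets the tangent cone of X at x₀ only at the origin: if v ∈ C(X, x₀) and π(v) = 0, then v = 0. Moreover, ‖π(v)‖ ≥ c·‖v‖ for every v ∈ C(X, x₀). -/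
/-!
The inequality `c * ‖v‖ ≤ ‖π v‖` cuts out a closed set of directions that is stable under all
rescalings. Every difference `x - x₀` with `x ∈ X` lies in it, and the tangent cone is contained
in the closure of the rescaled differences, hence in that set. On the kernel of `π` the
inequality forces `v = 0`.
-/

open Set

section TangentCone

variable {𝕜 E F : Type*} [NontriviallyNormedField 𝕜]
  [NormedAddCommGroup E] [NormedSpace 𝕜 E] [NormedAddCommGroup F] [NormedSpace 𝕜 F]

theorem tangentConeAt_subset_of_isClosed {s K : Set E} {x : E} (hK : IsClosed K)
    (hsmul : ∀ (a : 𝕜), ∀ v ∈ K, a • v ∈ K) (hs : ∀ y ∈ s, y - x ∈ K) :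
    tangentConeAt 𝕜 s x ⊆ K := by
  rw [tangentConeAt_eq_biInter_closure]
  refine (biInter_subset_of_mem Filter.univ_mem).trans (hK.closure_subset_iff.2 ?_)
  rintro _ ⟨a, -, v, ⟨-, hv⟩, rfl⟩
  exact hsmul a v (by simpa using hs _ hv)

theorem mul_norm_le_norm_apply_of_mem_tangentConeAt {s : Set E} {x : E} (f : E →L[𝕜] F)
    {c : ℝ} (h : ∀ y ∈ s, c * ‖y - x‖ ≤ ‖f y - f x‖) :
    ∀ v ∈ tangentConeAt 𝕜 s x, c * ‖v‖ ≤ ‖f v‖ := by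
  refine tangentConeAt_subset_of_isClosed (K := {v | c * ‖v‖ ≤ ‖f v‖})
    (isClosed_le (by fun_prop) (by fun_prop)) ?_ ?_
  · intro a v (hv : c * ‖v‖ ≤ ‖f v‖)
    calc c * ‖a • v‖ = ‖a‖ * (c * ‖v‖) := by rw [norm_smul]; ring
      _ ≤ ‖a‖ * ‖f v‖ := by gcongr
      _ = ‖f (a • v)‖ := by rw [map_smul, norm_smul]
  · intro y hy
    simpa [map_sub] using h y hy

end TangentCone

theorem stmt_4_general (n l : ℕ) (X : Set (EuclideanSpace ℝ (Fin n)))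
    (x₀ : EuclideanSpace ℝ (Fin n))
    (π : EuclideanSpace ℝ (Fin n) →ₗ[ℝ] EuclideanSpace ℝ (Fin l))
    (c : ℝ) (hc : 0 < c)
    (hlow : ∀ x ∈ X, c * ‖x - x₀‖ ≤ ‖π x - π x₀‖) :
    (∀ v ∈ tangentConeAt ℝ X x₀, π v = 0 → v = 0) ∧
    (∀ v ∈ tangentConeAt ℝ X x₀, c * ‖v‖ ≤ ‖π v‖) := by
  have hcone : ∀ v ∈ tangentConeAt ℝ X x₀, c * ‖v‖ ≤ ‖π v‖ :=
    mul_norm_le_norm_apply_of_mem_tangentConeAt (LinearMap.toContinuousLinearMap π) hlow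
  refine ⟨fun v hv hπv => ?_, hcone⟩
  have hv0 : c * ‖v‖ ≤ 0 := by simpa [hπv] using hcone v hv
  exact norm_le_zero_iff.1 (nonpos_of_mul_nonpos_right hv0 hc)

/-- If `X ⊆ ℝⁿ`, `x₀ ∈ X`, and `π : ℝⁿ → ℝˡ` is an `ℝ`-linear map with
`c·‖x - x₀‖ ≤ ‖π x - π x₀‖` on `X` for some `c > 0`, then `ker π` meets the tangent cone
`C(X, x₀)` only at the origin, and moreover `‖π v‖ ≥ c·‖v‖` for every `v ∈ C(X, x₀)`. -/
theorem stmt_4 (n l : ℕ) (X : Set (EuclideanSpace ℝ (Fin n)))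
    (x₀ : EuclideanSpace ℝ (Fin n)) (hx₀ : x₀ ∈ X)
    (π : EuclideanSpace ℝ (Fin n) →ₗ[ℝ] EuclideanSpace ℝ (Fin l))
    (c : ℝ) (hc : 0 < c)
    (hlow : ∀ x ∈ X, c * ‖x - x₀‖ ≤ ‖π x - π x₀‖) :
    (∀ v ∈ tangentConeAt ℝ X x₀, π v = 0 → v = 0) ∧
    (∀ v ∈ tangentConeAt ℝ X x₀, c * ‖v‖ ≤ ‖π v‖) :=
  stmt_4_general n l X x₀ π c hc hlow
end

section
/- Let X ⊆ ℝⁿ be a subset with 0 ∈ X, let ψ : X → ℝᵐ satisfy ψ(0) = 0 and ‖ψ(x)‖ ≤ C·‖x‖ for all x ∈ X (for some constant C > 0), and let Γ = {(x, ψ(x)) : x ∈ X} ⊆ ℝⁿ × ℝᵐ be the graph of ψ. Let π : ℝⁿ → ℝᵈ be an ℝ-linear map such that ker π ∩ C(X, 0) = {0}, and define π̃ : ℝⁿ × ℝᵐ → ℝᵈ by π̃(x, y) = π(x). Then π̃⁻¹(0) ∩ C(Γ, (0,0)) = {0}; that is, if (u, w) ∈ C(Γ, (0,0)) and π(u) =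 0, then (u, w) = (0, 0). -/
/-!
The first projection maps the tangent cone of the graph `Γ` into that of `X`, so `π u = 0`
forces `u = 0`. The growth bound on `ψ` puts `Γ` inside the closed cone `‖y‖ ≤ C‖x‖`, which
then contains the tangent cone of `Γ` too, whence `‖w‖ ≤ C‖u‖ = 0`.
-/

open Set

section TangentCone

variable {R E F : Type*} [Semiring R] [AddCommGroup E] [Module R E] [TopologicalSpace E]
  [AddCommGroup F] [Module R F] [TopologicalSpace F]

theorem ContinuousLinearMap.mapsTo_tangentConeAt (f : E →L[R] F) (s : Set E) (x : E) :
    MapsTo f (tangentConeAt R s x) (tangentConeAt R (f '' s) (f x)) := by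
  intro y hy
  obtain ⟨α, l, hl, c, d, hd₀, hds, hcd⟩ := exists_fun_of_mem_tangentConeAt hy
  refine mem_tangentConeAt_of_seq l c (f ∘ d) ?_ ?_ ?_
  · simpa using (f.continuous.tendsto 0).comp hd₀
  · filter_upwards [hds] with n hn
    simpa using mem_image_of_mem f hn
  · exact ((f.continuous.tendsto y).comp hcd).congr fun n ↦ f.map_smul (c n) (d n)

theorem tangentConeAt_zero_subset {s K : Set E} (hK : IsClosed K)
    (hsmul : ∀ c : R, ∀ v ∈ K, c • v ∈ K) (hsK : s ⊆ K) : tangentConeAt R s 0 ⊆ K := by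
  intro y hy
  obtain ⟨α, l, hl, c, d, -, hds, hcd⟩ := exists_fun_of_mem_tangentConeAt hy
  refine hK.mem_of_tendsto hcd ?_
  filter_upwards [hds] with n hn
  exact hsmul (c n) (d n) (hsK (by simpa using hn))

end TangentCone

theorem norm_snd_le_of_mem_tangentConeAt {𝕜 E F : Type*} [NormedField 𝕜]
    [SeminormedAddCommGroup E] [NormedSpace 𝕜 E] [SeminormedAddCommGroup F] [NormedSpace 𝕜 F]
    {s : Set (E × F)} {C : ℝ} (hs : ∀ q ∈ s, ‖q.2‖ ≤ C * ‖q.1‖) {v : E × F}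
    (hv : v ∈ tangentConeAt 𝕜 s 0) : ‖v.2‖ ≤ C * ‖v.1‖ := by
  refine tangentConeAt_zero_subset (K := {q : E × F | ‖q.2‖ ≤ C * ‖q.1‖}) ?_ ?_ hs hv
  · exact isClosed_le (by fun_prop) (by fun_prop)
  · intro c q hq
    calc ‖(c • q).2‖ = ‖c‖ * ‖q.2‖ := norm_smul c q.2
      _ ≤ ‖c‖ * (C * ‖q.1‖) := by gcongr; exact hq
      _ = C * ‖(c • q).1‖ := by rw [Prod.smul_fst, norm_smul]; ring

theorem stmt_6_general (n m d : ℕ) (X : Set (EuclideanSpace ℝ (Fin n)))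
    (ψ : EuclideanSpace ℝ (Fin n) → EuclideanSpace ℝ (Fin m))
    (C : ℝ)
    (hψ : ∀ x ∈ X, ‖ψ x‖ ≤ C * ‖x‖)
    (π : EuclideanSpace ℝ (Fin n) →ₗ[ℝ] EuclideanSpace ℝ (Fin d))
    (hker : ∀ v ∈ tangentConeAt ℝ X 0, π v = 0 → v = 0) :
    ∀ u : EuclideanSpace ℝ (Fin n), ∀ w : EuclideanSpace ℝ (Fin m),
      (u, w) ∈ tangentConeAt ℝ
          {q : EuclideanSpace ℝ (Fin n) × EuclideanSpace ℝ (Fin m) |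
            q.1 ∈ X ∧ q.2 = ψ q.1} ((0, 0) : EuclideanSpace ℝ (Fin n) × EuclideanSpace ℝ (Fin m)) →
        π u = 0 → (u = 0 ∧ w = 0) := by
  intro u w hmem hπu
  have hu : u ∈ tangentConeAt ℝ X 0 := by
    refine tangentConeAt_mono ?_ ((ContinuousLinearMap.fst ℝ _ _).mapsTo_tangentConeAt _ _ hmem)
    rintro _ ⟨q, ⟨hqX, -⟩, rfl⟩
    exact hqX
  have hu0 : u = 0 := hker u hu hπu
  have hw : ‖w‖ ≤ C * ‖u‖ := by
    refine norm_snd_le_of_mem_tangentConeAt (fun q hq ↦ ?_) hmem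
    rw [hq.2]
    exact hψ q.1 hq.1
  refine ⟨hu0, norm_le_zero_iff.mp ?_⟩
  simpa [hu0] using hw

/-- Let `X ⊆ ℝⁿ` with `0 ∈ X`, let `ψ : X → ℝᵐ` satisfy `ψ 0 = 0` and
`‖ψ x‖ ≤ C·‖x‖` on `X`, and let `Γ` be the graph of `ψ`. If `π : ℝⁿ → ℝᵈ` is `ℝ`-linear with
`ker π ∩ C(X, 0) = {0}`, and `π̃(x, y) = π x`, then `π̃⁻¹(0) ∩ C(Γ, (0,0)) = {0}`; i.e. if
`(u, w) ∈ C(Γ, (0,0))` and `π u = 0`, then `(u, w) = (0, 0)`. -/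
theorem stmt_6 (n m d : ℕ) (X : Set (EuclideanSpace ℝ (Fin n))) (h0X : (0 : EuclideanSpace ℝ (Fin n)) ∈ X)
    (ψ : EuclideanSpace ℝ (Fin n) → EuclideanSpace ℝ (Fin m))
    (hψ0 : ψ 0 = 0) (C : ℝ) (hC : 0 < C)
    (hψ : ∀ x ∈ X, ‖ψ x‖ ≤ C * ‖x‖)
    (π : EuclideanSpace ℝ (Fin n) →ₗ[ℝ] EuclideanSpace ℝ (Fin d))
    (hker : ∀ v ∈ tangentConeAt ℝ X 0, π v = 0 → v = 0) :
    ∀ u : EuclideanSpace ℝ (Fin n), ∀ w : EuclideanSpace ℝ (Fin m),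
      (u, w) ∈ tangentConeAt ℝ
          {q : EuclideanSpace ℝ (Fin n) × EuclideanSpace ℝ (Fin m) |
            q.1 ∈ X ∧ q.2 = ψ q.1} ((0, 0) : EuclideanSpace ℝ (Fin n) × EuclideanSpace ℝ (Fin m)) →
        π u = 0 → (u = 0 ∧ w = 0) :=
  stmt_6_general n m d X ψ C hψ π hker
end

section
/- Define g₁, g₂ : ℝ² → ℝ by g₁(x, y) = y³/(x² + y²) and g₂(x, y) = y⁵/(x⁴ + y⁴) for (x, y) ≠ (0, 0), and g₁(0, 0) = g₂(0, 0) = 0, and define h : ℝ³ → ℝ³ by h(x, y, z) = (x, y, z − g₁(x, y) + g₂(x, y)). Then h is a bijection of ℝ³ with inverse h⁻¹(x, y, z) = (x, y, z + g₁(x, y) − g₂(x, y)), h(0, 0, 0) = (0, 0, 0), and both h and h⁻¹ are Lipschitz; that is, h is a bi-Lipschitz homeomorphism of ℝ³ fixing the origin. -/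
/-!
The map `h` is the shear `p ↦ p + φ(p) e₃` along the `z`-axis, where `φ = g₂ - g₁` depends only on
the first two coordinates; such a shear is undone by the shear by `-φ`, and it is Lipschitz as soon
as `φ` is. Both `g₁` and `g₂` are instances (`n = 1, 2`) of `y^(2n+1) / (x^(2n) + y^(2n))`, which is
Lipschitz in each variable separately: on the axes it is `0` resp. `y`, and otherwise the
denominator never vanishes and the partial derivatives are bounded by `2n` resp. `2n + 1`.
-/

open scoped NNReal

section Shear

variable {E : Type*} [SeminormedAddCommGroup E] [NormedSpace ℝ E]

def shear (φ : E → ℝ) (e p : E) : E := p + φ p • e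

variable {φ : E → ℝ} {e : E}

lemma leftInverse_shear_neg (hφ : ∀ p (t : ℝ), φ (p + t • e) = φ p) :
    Function.LeftInverse (shear (-φ) e) (shear φ e) := fun p => by
  simp [shear, hφ]

lemma rightInverse_shear_neg (hφ : ∀ p (t : ℝ), φ (p + t • e) = φ p) :
    Function.RightInverse (shear (-φ) e) (shear φ e) := fun p => by
  rw [shear, shear, Pi.neg_apply, hφ, neg_smul, neg_add_cancel_right]

lemma lipschitzWith_smul_right (e : E) : LipschitzWith ‖e‖₊ (fun t : ℝ => t • e) :=
  LipschitzWith.of_dist_le_mul fun s t => by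
    simp [dist_eq_norm, ← sub_smul, norm_smul, mul_comm]

lemma lipschitzWith_shear {K : ℝ≥0} (hφ : LipschitzWith K φ) (e : E) :
    LipschitzWith (1 + ‖e‖₊ * K) (shear φ e) :=
  LipschitzWith.id.add ((lipschitzWith_smul_right e).comp hφ)

end Shear

lemma lipschitzWith_euclidean_pair {ι : Type*} [Fintype ι] (i j : ι) :
    LipschitzWith 1 (fun p : EuclideanSpace ℝ ι => (p i, p j)) := by
  have hi := (LipschitzWith.eval i).comp (PiLp.lipschitzWith_ofLp 2 fun _ : ι => ℝ)
  have hj := (LipschitzWith.eval j).comp (PiLp.lipschitzWith_ofLp 2 fun _ : ι => ℝ)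
  simpa using hi.prodMk hj

lemma lipschitzWith_of_hasDerivAt_abs_le {f f' : ℝ → ℝ} {C : ℝ≥0}
    (hf : ∀ x, HasDerivAt f (f' x) x) (hC : ∀ x, |f' x| ≤ C) : LipschitzWith C f :=
  lipschitzWith_of_nnnorm_deriv_le (fun x => (hf x).differentiableAt) fun x => by
    rw [← NNReal.coe_le_coe, coe_nnnorm, Real.norm_eq_abs, (hf x).deriv]
    exact hC x

noncomputable def powRatio (n : ℕ) (x y : ℝ) : ℝ := y ^ (2 * n + 1) / (x ^ (2 * n) + y ^ (2 * n))

section PowRatio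

variable {n : ℕ}

lemma powRatio_zero_right (n : ℕ) (x : ℝ) : powRatio n x 0 = 0 := by
  simp [powRatio]

lemma powRatio_zero_left (hn : n ≠ 0) (y : ℝ) : powRatio n 0 y = y := by
  rcases eq_or_ne y 0 with rfl | hy
  · simp [powRatio]
  · rw [powRatio, zero_pow (by omega), zero_add, pow_succ, mul_div_cancel_left₀ _ (by positivity)]

lemma abs_pow_mul_abs_pow_le_sq (hn : n ≠ 0) (x y : ℝ) :
    |x| ^ (2 * n - 1) * |y| ^ (2 * n + 1) ≤ (x ^ (2 * n) + y ^ (2 * n)) ^ 2 := by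
  have hM : max |x| |y| ^ (2 * n) ≤ x ^ (2 * n) + y ^ (2 * n) := by
    rcases max_choice |x| |y| with h | h <;> rw [h, (even_two_mul n).pow_abs] <;>
      linarith [(even_two_mul n).pow_nonneg x, (even_two_mul n).pow_nonneg y]
  calc |x| ^ (2 * n - 1) * |y| ^ (2 * n + 1)
      ≤ max |x| |y| ^ (2 * n - 1) * max |x| |y| ^ (2 * n + 1) := by
        gcongr
        exacts [le_max_left _ _, le_max_right _ _]
    _ = (max |x| |y| ^ (2 * n)) ^ 2 := by rw [← pow_add, ← pow_mul]; congr 1; omega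
    _ ≤ _ := by gcongr

lemma lipschitzWith_powRatio_left (hn : n ≠ 0) (y : ℝ) :
    LipschitzWith (2 * n) (fun x => powRatio n x y) := by
  rcases eq_or_ne y 0 with rfl | hy
  · simpa [powRatio_zero_right] using (LipschitzWith.const (α := ℝ) (0 : ℝ)).weaken zero_le
  have hS : ∀ x : ℝ, 0 < x ^ (2 * n) + y ^ (2 * n) := fun x => by
    have := (even_two_mul n).pow_pos hy
    linarith [(even_two_mul n).pow_nonneg x]
  refine lipschitzWith_of_hasDerivAt_abs_le
    (fun x => (hasDerivAt_const x (y ^ (2 * n + 1))).div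
      ((hasDerivAt_pow (2 * n) x).add_const (y ^ (2 * n))) (hS x).ne') fun x => ?_
  rw [abs_div, abs_of_pos (pow_pos (hS x) 2), div_le_iff₀ (pow_pos (hS x) 2)]
  simp only [zero_mul, zero_sub, abs_neg, abs_mul, abs_pow, Nat.abs_cast]
  push_cast
  calc _ = 2 * n * (|x| ^ (2 * n - 1) * |y| ^ (2 * n + 1)) := by ring
    _ ≤ _ := by gcongr; exact abs_pow_mul_abs_pow_le_sq hn x y

lemma lipschitzWith_powRatio_right (hn : n ≠ 0) (x : ℝ) :
    LipschitzWith (2 * n + 1) (powRatio n x) := by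
  rcases eq_or_ne x 0 with rfl | hx
  · rw [show powRatio n 0 = id from funext (powRatio_zero_left hn)]
    exact LipschitzWith.id.weaken le_add_self
  have hS : ∀ y : ℝ, 0 < x ^ (2 * n) + y ^ (2 * n) := fun y => by
    have := (even_two_mul n).pow_pos hx
    linarith [(even_two_mul n).pow_nonneg y]
  refine lipschitzWith_of_hasDerivAt_abs_le
    (fun y => (hasDerivAt_pow (2 * n + 1) y).div
      ((hasDerivAt_pow (2 * n) y).const_add (x ^ (2 * n))) (hS y).ne') fun y => ?_
  rw [abs_div, abs_of_pos (pow_pos (hS y) 2), div_le_iff₀ (pow_pos (hS y) 2)]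
  have hy : y ^ (2 * n + 1) * y ^ (2 * n - 1) = (y ^ (2 * n)) ^ 2 := by
    rw [← pow_add, ← pow_mul]; congr 1; omega
  have ht := (even_two_mul n).pow_nonneg x
  have hs := (even_two_mul n).pow_nonneg y
  have hnum : ((2 * n + 1 : ℕ) : ℝ) * y ^ (2 * n + 1 - 1) * (x ^ (2 * n) + y ^ (2 * n)) -
      y ^ (2 * n + 1) * ((2 * n : ℕ) * y ^ (2 * n - 1)) =
      (2 * n + 1) * (y ^ (2 * n) * x ^ (2 * n)) + (y ^ (2 * n)) ^ 2 := by
    push_cast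
    linear_combination (-2 * n : ℝ) * hy
  rw [hnum, abs_of_nonneg (by positivity)]
  push_cast
  have hN : (0 : ℝ) ≤ n := n.cast_nonneg
  nlinarith [mul_nonneg hN (sq_nonneg (x ^ (2 * n))), mul_nonneg hN (mul_nonneg ht hs),
    mul_nonneg hN (sq_nonneg (y ^ (2 * n))), sq_nonneg (x ^ (2 * n)), mul_nonneg ht hs]

lemma lipschitzWith_uncurry_powRatio (hn : n ≠ 0) :
    LipschitzWith (2 * n + (2 * n + 1)) (Function.uncurry (powRatio n)) :=
  LipschitzWith.uncurry (lipschitzWith_powRatio_left hn) (lipschitzWith_powRatio_right hn)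

end PowRatio

/-- With `g₁(x,y) = y³/(x² + y²)`, `g₂(x,y) = y⁵/(x⁴ + y⁴)` (both `0` at the
origin), the map `h(x,y,z) = (x, y, z - g₁(x,y) + g₂(x,y))` is a bijection of `ℝ³` with inverse
`(x,y,z) ↦ (x, y, z + g₁(x,y) - g₂(x,y))`, fixes the origin, and both `h` and its inverse are
Lipschitz; i.e. `h` is a bi-Lipschitz homeomorphism of `ℝ³` fixing the origin. -/
theorem stmt_10 (g₁ g₂ : ℝ → ℝ → ℝ)
    (hg₁ : ∀ x y : ℝ, g₁ x y = if x = 0 ∧ y = 0 then 0 else y ^ 3 / (x ^ 2 + y ^ 2))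
    (hg₂ : ∀ x y : ℝ, g₂ x y = if x = 0 ∧ y = 0 then 0 else y ^ 5 / (x ^ 4 + y ^ 4))
    (h hinv : EuclideanSpace ℝ (Fin 3) → EuclideanSpace ℝ (Fin 3))
    (hh : ∀ p : EuclideanSpace ℝ (Fin 3),
      h p = (WithLp.toLp 2 ![p 0, p 1, p 2 - g₁ (p 0) (p 1) + g₂ (p 0) (p 1)] : EuclideanSpace ℝ (Fin 3)))
    (hhinv : ∀ p : EuclideanSpace ℝ (Fin 3),
      hinv p = (WithLp.toLp 2 ![p 0, p 1, p 2 + g₁ (p 0) (p 1) - g₂ (p 0) (p 1)] : EuclideanSpace ℝ (Fin 3))) :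
    Function.Bijective h ∧
    (∀ p : EuclideanSpace ℝ (Fin 3), hinv (h p) = p) ∧
    (∀ p : EuclideanSpace ℝ (Fin 3), h (hinv p) = p) ∧
    h 0 = 0 ∧
    (∃ K : ℝ, 0 < K ∧ ∀ p q : EuclideanSpace ℝ (Fin 3), ‖h p - h q‖ ≤ K * ‖p - q‖) ∧
    (∃ K : ℝ, 0 < K ∧ ∀ p q : EuclideanSpace ℝ (Fin 3), ‖hinv p - hinv q‖ ≤ K * ‖p - q‖) := by
  -- `0 / 0 = 0` in Lean, so the case distinction at the origin is already built into `powRatio`.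
  obtain rfl : g₁ = powRatio 1 := by
    ext x y; rw [hg₁]; split_ifs with h0 <;> simp [powRatio, h0]
  obtain rfl : g₂ = powRatio 2 := by
    ext x y; rw [hg₂]; split_ifs with h0 <;> simp [powRatio, h0]
  set e : EuclideanSpace ℝ (Fin 3) := EuclideanSpace.single 2 1
  set φ : EuclideanSpace ℝ (Fin 3) → ℝ := fun p =>
    Function.uncurry (powRatio 2) (p 0, p 1) - Function.uncurry (powRatio 1) (p 0, p 1)
  have hφ : ∀ p (t : ℝ), φ (p + t • e) = φ p := fun p t => by simp [φ, e]
  have hpair := lipschitzWith_euclidean_pair (0 : Fin 3) 1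
  have hφ_lip : LipschitzWith _ φ :=
    ((lipschitzWith_uncurry_powRatio two_ne_zero).comp hpair).sub
      ((lipschitzWith_uncurry_powRatio one_ne_zero).comp hpair)
  have hh : h = shear φ e := by
    ext p i; fin_cases i <;> simp [hh, shear, φ, e]; ring
  have hhinv : hinv = shear (-φ) e := by
    ext p i; fin_cases i <;> simp [hhinv, shear, φ, e]; ring
  subst hh hhinv
  refine ⟨⟨(leftInverse_shear_neg hφ).injective, (rightInverse_shear_neg hφ).surjective⟩,
    leftInverse_shear_neg hφ, rightInverse_shear_neg hφ, by simp [shear, φ, powRatio],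
    ⟨_, by positivity, (lipschitzWith_shear hφ_lip e).norm_sub_le⟩,
    ⟨_, by positivity, (lipschitzWith_shear hφ_lip.neg e).norm_sub_le⟩⟩
end

section
/- Define g₁, g₂ : ℝ² → ℝ by g₁(x, y) = y³/(x² + y²) and g₂(x, y) = y⁵/(x⁴ + y⁴) for (x, y) ≠ (0, 0), and g₁(0, 0) = g₂(0, 0) = 0, and define h : ℝ³ → ℝ³ by h(x, y, z) = (x, y, z − g₁(x, y) + g₂(x, y)). Let X = {(x, y, z) ∈ ℝ³ : z·(x² + y²) = y³} and Y = {(x, y, z) ∈ ℝ³ : z·(x⁴ + y⁴) = y⁵}. Then h maps X onto Y; that is, the image h(X) equals Y. -/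
/-!
The map `h` is the shear `(x, y, z) ↦ (x, y, z - g₁ + g₂)`, whose inverse is the opposite shear,
so `h '' X` is the preimage of `X` under that inverse. Away from the `z`-axis, `z · (x² + y²) = y³`
says exactly that `z = g₁(x, y)`, and `z · (x⁴ + y⁴) = y⁵` that `z = g₂(x, y)`; the shear moves the
first graph onto the second. On the `z`-axis both equations read `0 = 0`.
-/

theorem even_pow_add_even_pow_ne_zero {R : Type*} [Ring R] [LinearOrder R] [IsStrictOrderedRing R]
    {n : ℕ} (hn : Even n) (hn₀ : n ≠ 0) {x y : R} (hxy : ¬(x = 0 ∧ y = 0)) :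
    x ^ n + y ^ n ≠ 0 := by
  rw [ne_eq, add_eq_zero_iff_of_nonneg (hn.pow_nonneg x) (hn.pow_nonneg y),
    pow_eq_zero_iff hn₀, pow_eq_zero_iff hn₀]
  exact hxy

theorem sub_div_add_div_mul_eq_iff {K : Type*} [Field K] {a b : K} (ha : a ≠ 0) (hb : b ≠ 0)
    (z u v : K) : (z - u / a + v / b) * b = v ↔ z * a = u := by
  rw [add_mul, div_mul_cancel₀ _ hb, add_eq_right, mul_eq_zero, or_iff_left hb, sub_eq_zero,
    eq_div_iff ha]

theorem mul_sq_add_sq_eq_cube_iff (g₁ g₂ : ℝ → ℝ → ℝ)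
    (hg₁ : ∀ x y : ℝ, g₁ x y = if x = 0 ∧ y = 0 then 0 else y ^ 3 / (x ^ 2 + y ^ 2))
    (hg₂ : ∀ x y : ℝ, g₂ x y = if x = 0 ∧ y = 0 then 0 else y ^ 5 / (x ^ 4 + y ^ 4))
    (x y z : ℝ) :
    z * (x ^ 2 + y ^ 2) = y ^ 3 ↔ (z - g₁ x y + g₂ x y) * (x ^ 4 + y ^ 4) = y ^ 5 := by
  rw [hg₁, hg₂]
  split_ifs with hxy
  · simp [hxy.1, hxy.2]
  · exact (sub_div_add_div_mul_eq_iff (even_pow_add_even_pow_ne_zero even_two two_ne_zero hxy)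
      (even_pow_add_even_pow_ne_zero (by decide) four_ne_zero hxy) z _ _).symm

/-- With `g₁(x,y) = y³/(x² + y²)`, `g₂(x,y) = y⁵/(x⁴ + y⁴)` (both `0` at the
origin) and `h(x,y,z) = (x, y, z - g₁(x,y) + g₂(x,y))`, the map `h` carries the real algebraic
set `X = {z·(x² + y²) = y³}` onto `Y = {z·(x⁴ + y⁴) = y⁵}`: `h '' X = Y`. -/
theorem stmt_11 (g₁ g₂ : ℝ → ℝ → ℝ)
    (hg₁ : ∀ x y : ℝ, g₁ x y = if x = 0 ∧ y = 0 then 0 else y ^ 3 / (x ^ 2 + y ^ 2))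
    (hg₂ : ∀ x y : ℝ, g₂ x y = if x = 0 ∧ y = 0 then 0 else y ^ 5 / (x ^ 4 + y ^ 4))
    (h : EuclideanSpace ℝ (Fin 3) → EuclideanSpace ℝ (Fin 3))
    (hh : ∀ p : EuclideanSpace ℝ (Fin 3),
      h p = (WithLp.toLp 2 ![p 0, p 1, p 2 - g₁ (p 0) (p 1) + g₂ (p 0) (p 1)] : EuclideanSpace ℝ (Fin 3))) :
    h '' {p : EuclideanSpace ℝ (Fin 3) | p 2 * ((p 0) ^ 2 + (p 1) ^ 2) = (p 1) ^ 3} =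
      {p : EuclideanSpace ℝ (Fin 3) | p 2 * ((p 0) ^ 4 + (p 1) ^ 4) = (p 1) ^ 5} := by
  set hinv : EuclideanSpace ℝ (Fin 3) → EuclideanSpace ℝ (Fin 3) := fun p ↦
    WithLp.toLp 2 ![p 0, p 1, p 2 + g₁ (p 0) (p 1) - g₂ (p 0) (p 1)]
  have hleft : Function.LeftInverse hinv h := fun p ↦ by
    ext i; fin_cases i <;> simp [hinv, hh, add_sub_assoc]
  have hright : Function.RightInverse hinv h := fun p ↦ by
    ext i; fin_cases i <;> simp [hinv, hh, add_sub_assoc]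
  rw [Set.image_eq_preimage_of_inverse hleft hright]
  ext p
  simp [hinv, mul_sq_add_sq_eq_cube_iff g₁ g₂ hg₁ hg₂, add_sub_assoc]
end
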